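/- Let d be even and let F₁,…,F_d be symmetric distribution functions with zero means (i.e., F_i⁻¹(u) = −F_i⁻¹(1−u)). Then the supremum of E(X₁⋯X_d) over all couplings with X_i ~ F_i equals E(∏_{i=1}^d G_i⁻¹(U)), where G_i is the distribution function of |X_i|, and it is attained by the comonotonic coupling X_i = F_i⁻¹(U), U ~ Uniform[0,1]. -/

import Mathlib

/-!
Symmetry gives `F⁻¹(1 - u) = -F⁻¹(u)` for a.e. `u` and `G⁻¹(v) = F⁻¹((1 + v) / 2)`. As `d` is even,
`∏ F_i⁻¹` is then symmetric about `1/2`, so its integral over `[0, 1]` is twice the integral over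
`[1/2, 1]`, which is the integral of `∏ G_i⁻¹`.

For the bound, `E ∏ X_i ≤ E ∏ |X_i|`, and by the multivariate layer-cake formula
`E ∏ |X_i| = ∫ P(t_i < |X_i| for all i) dt`. The integrand is at most `min_i P(t_i < |X_i|)`,
and this minimum is attained by the comonotone coupling `|X_i| = G_i⁻¹(U)`.
-/

open MeasureTheory Set

/-- Generalized inverse (quantile function). -/
noncomputable def quantile (ν : Measure ℝ) (u : ℝ) : ℝ :=
  sInf {x : ℝ | u ≤ (ν (Iic x)).toReal}

open ProbabilityTheory Filter Topology

section Quantile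

variable {ν : Measure ℝ} {u t : ℝ}

lemma bddBelow_setOf_le_cdf (hu : 0 < u) : BddBelow {x | u ≤ cdf ν x} := by
  obtain ⟨x₀, hx₀⟩ := ((tendsto_cdf_atBot ν).eventually_lt_const hu).exists_forall_of_atBot
  exact ⟨x₀, fun x hx => le_of_not_gt fun hlt => (hx.trans_lt (hx₀ x hlt.le)).false⟩

lemma nonempty_setOf_le_cdf (hu : u < 1) : {x | u ≤ cdf ν x}.Nonempty :=
  ((tendsto_cdf_atTop ν).eventually_const_le hu).exists

variable [IsProbabilityMeasure ν]

lemma quantile_eq_sInf_cdf : quantile ν u = sInf {x | u ≤ cdf ν x} := by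
  simp only [quantile, cdf_eq_real, measureReal_def]

lemma le_cdf_quantile (hu1 : u < 1) : u ≤ cdf ν (quantile ν u) := by
  have hgt : ∀ x, quantile ν u < x → u ≤ cdf ν x := fun x hx => by
    rw [quantile_eq_sInf_cdf] at hx
    obtain ⟨y, hy, hyx⟩ := exists_lt_of_csInf_lt (nonempty_setOf_le_cdf hu1) hx
    exact hy.trans (monotone_cdf ν hyx.le)
  exact ge_of_tendsto (((cdf ν).right_continuous _).mono Ioi_subset_Ici_self)
    (eventually_nhdsWithin_of_forall hgt)

lemma quantile_le_iff (hu0 : 0 < u) (hu1 : u < 1) : quantile ν u ≤ t ↔ u ≤ cdf ν t :=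
  ⟨fun h => (le_cdf_quantile hu1).trans (monotone_cdf ν h), fun h => by
    rw [quantile_eq_sInf_cdf]; exact csInf_le (bddBelow_setOf_le_cdf hu0) h⟩

lemma lt_quantile_iff (hu0 : 0 < u) (hu1 : u < 1) : t < quantile ν u ↔ cdf ν t < u := by
  rw [← not_le, ← not_le, quantile_le_iff hu0 hu1]

lemma monotoneOn_quantile : MonotoneOn (quantile ν) (Ioo 0 1) := fun _ hu _ hv huv =>
  (quantile_le_iff hu.1 hu.2).2 (huv.trans (le_cdf_quantile hv.2))

lemma aemeasurable_quantile : AEMeasurable (quantile ν) (volume.restrict (Ioo 0 1)) :=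
  aemeasurable_restrict_of_monotoneOn measurableSet_Ioo monotoneOn_quantile

lemma quantile_nonneg (hν : ν (Iio 0) = 0) (hu : u ∈ Ioo 0 1) : 0 ≤ quantile ν u :=
  le_of_forall_lt fun c hc => (lt_quantile_iff hu.1 hu.2).2 <| by
    have : cdf ν c ≤ 0 := by
      rw [cdf_eq_real, ← ENNReal.toReal_zero, ← hν]
      exact measureReal_mono (Iic_subset_Iio.2 hc)
    linarith [hu.1]

lemma measureReal_Ioi_eq_one_sub_cdf (x : ℝ) : ν.real (Ioi x) = 1 - cdf ν x := by
  rw [← compl_Iic, probReal_compl_eq_one_sub measurableSet_Iic, cdf_eq_real]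

instance isProbabilityMeasure_map_abs : IsProbabilityMeasure (ν.map fun x => |x|) :=
  Measure.isProbabilityMeasure_map measurable_abs.aemeasurable

lemma cdf_map_abs_of_neg (ht : t < 0) : cdf (ν.map fun x => |x|) t = 0 := by
  rw [cdf_eq_real, map_measureReal_apply measurable_abs measurableSet_Iic]
  convert measureReal_empty (μ := ν)
  exact eq_empty_of_forall_notMem fun x hx => (abs_nonneg x).not_gt (lt_of_le_of_lt hx ht)

end Quantile

section Symmetric

variable {ν : Measure ℝ} (hsym : ν.map (fun x => -x) = ν)
include hsym

lemma measure_Iic_neg_of_map_neg_eq (x : ℝ) : ν (Iic (-x)) = ν (Ici x) := by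
  conv_lhs => rw [← hsym]
  rw [Measure.map_apply measurable_neg measurableSet_Iic]
  congr 1
  ext y
  simp

lemma measure_Iio_neg_of_map_neg_eq (x : ℝ) : ν (Iio (-x)) = ν (Ioi x) := by
  conv_lhs => rw [← hsym]
  rw [Measure.map_apply measurable_neg measurableSet_Iio]
  congr 1
  ext y
  simp

variable [IsProbabilityMeasure ν]

lemma one_le_cdf_add_cdf_neg (x : ℝ) : 1 ≤ cdf ν x + cdf ν (-x) := by
  have hsymm : cdf ν (-x) = ν.real (Ici x) := by
    rw [cdf_eq_real, measureReal_def, measure_Iic_neg_of_map_neg_eq hsym, measureReal_def]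
  have hIoi : ν.real (Ioi x) ≤ ν.real (Ici x) := measureReal_mono Ioi_subset_Ici_self
  linarith [measureReal_Ioi_eq_one_sub_cdf (ν := ν) x]

lemma cdf_add_cdf_le_one {x y : ℝ} (hxy : x + y < 0) : cdf ν x + cdf ν y ≤ 1 := by
  have hsymm : ν.real (Iio (-y)) = 1 - cdf ν y := by
    rw [measureReal_def, measure_Iio_neg_of_map_neg_eq hsym, ← measureReal_def,
      measureReal_Ioi_eq_one_sub_cdf]
  have hIic : cdf ν x ≤ ν.real (Iio (-y)) := by
    rw [cdf_eq_real]; exact measureReal_mono (Iic_subset_Iio.2 (by linarith))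
  linarith

lemma quantile_le_neg_quantile_one_sub {u : ℝ} (hu : u ∈ Ioo 0 1) :
    quantile ν u ≤ -quantile ν (1 - u) := by
  refine le_of_forall_gt_imp_ge_of_dense fun c hc => (quantile_le_iff hu.1 hu.2).2 ?_
  have h1 : cdf ν (-c) < 1 - u :=
    (lt_quantile_iff (by linarith [hu.2]) (by linarith [hu.1])).1 (by linarith)
  linarith [one_le_cdf_add_cdf_neg hsym c]

lemma neg_quantile_one_sub_le_quantile {u v : ℝ} (hu : u ∈ Ioo 0 1) (hv : v ∈ Ioo 0 1)
    (huv : u < v) : -quantile ν (1 - u) ≤ quantile ν v := by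
  by_contra! hlt
  obtain ⟨t, hut, htv⟩ := exists_between (lt_neg_of_lt_neg hlt)
  have h1 : 1 - u ≤ cdf ν t :=
    (quantile_le_iff (by linarith [hu.2]) (by linarith [hu.1])).1 hut.le
  have h2 : v ≤ cdf ν (quantile ν v) := le_cdf_quantile hv.2
  linarith [cdf_add_cdf_le_one hsym (x := quantile ν v) (y := t) (by linarith)]

/-- The open intervals `(q u, -q (1 - u))` are pairwise disjoint, so only countably many of them
are nonempty. -/
lemma countable_setOf_quantile_lt_neg_quantile_one_sub :
    {u ∈ Ioo 0 1 | quantile ν u < -quantile ν (1 - u)}.Countable := by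
  set I : ℝ → Set ℝ := fun u => Ioo (quantile ν u) (-quantile ν (1 - u))
  have hdisj : ∀ u ∈ Ioo (0 : ℝ) 1, ∀ v ∈ Ioo (0 : ℝ) 1, u < v → Disjoint (I u) (I v) :=
    fun u hu v hv huv => disjoint_left.2 fun x hxu hxv => by
      linarith [hxu.2, hxv.1, neg_quantile_one_sub_le_quantile hsym hu hv huv]
  refine PairwiseDisjoint.countable_of_isOpen (s := I) (fun u hu v hv huv => ?_)
    (fun _ _ => isOpen_Ioo) (fun _ hu => nonempty_Ioo.2 hu.2)
  rcases huv.lt_or_gt with h | h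
  · exact hdisj u hu.1 v hv.1 h
  · exact (hdisj v hv.1 u hu.1 h).symm

lemma ae_quantile_one_sub_eq_neg :
    ∀ᵐ u, u ∈ Ioo (0 : ℝ) 1 → quantile ν (1 - u) = -quantile ν u := by
  filter_upwards [(countable_setOf_quantile_lt_neg_quantile_one_sub hsym).ae_notMem volume]
    with u hu hu01
  have := quantile_le_neg_quantile_one_sub hsym hu01
  by_contra hne
  exact hu ⟨hu01, lt_of_le_of_ne this fun h => hne (by linarith)⟩

lemma cdf_map_abs {t : ℝ} (ht : 0 ≤ t) : cdf (ν.map fun x => |x|) t = 2 * cdf ν t - 1 := by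
  have hpre : (fun x => |x|) ⁻¹' Iic t = Icc (-t) t := by ext; simp [abs_le]
  have hsplit : ν.real (Iio (-t)) + ν.real (Icc (-t) t) = cdf ν t := by
    rw [← measureReal_union (μ := ν) ((Iio_disjoint_Ici le_rfl).mono_right Icc_subset_Ici_self)
      measurableSet_Icc, Iio_union_Icc_eq_Iic (by linarith), cdf_eq_real]
  have hIio : ν.real (Iio (-t)) = 1 - cdf ν t := by
    rw [measureReal_def, measure_Iio_neg_of_map_neg_eq hsym, ← measureReal_def,
      measureReal_Ioi_eq_one_sub_cdf]
  rw [cdf_eq_real, map_measureReal_apply measurable_abs measurableSet_Iic, hpre]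
  linarith

lemma quantile_map_abs {v : ℝ} (hv : v ∈ Ioo 0 1) :
    quantile (ν.map fun x => |x|) v = quantile ν ((1 + v) / 2) := by
  refine eq_of_forall_ge_iff fun t => ?_
  rw [quantile_le_iff hv.1 hv.2, quantile_le_iff (by linarith [hv.1]) (by linarith [hv.2])]
  rcases lt_or_ge t 0 with ht | ht
  · have := cdf_add_cdf_le_one hsym (x := t) (y := t) (by linarith)
    rw [cdf_map_abs_of_neg ht]
    constructor <;> intro h <;> linarith [hv.1]
  · rw [cdf_map_abs hsym ht]
    constructor <;> intro h <;> linarith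

end Symmetric

lemma intervalIntegral_zero_one_eq_comp_one_add_div_two {g : ℝ → ℝ}
    (hg : IntervalIntegrable g volume 0 1)
    (hsymm : ∀ᵐ u, u ∈ Ioo (0 : ℝ) 1 → g (1 - u) = g u) :
    ∫ u in (0 : ℝ)..1, g u = ∫ u in (0 : ℝ)..1, g ((1 + u) / 2) := by
  have hlower : ∫ u in (0 : ℝ)..1 / 2, g u = ∫ u in (1 / 2 : ℝ)..1, g u := by
    calc ∫ u in (0 : ℝ)..1 / 2, g u = ∫ u in (1 / 2 : ℝ)..1, g (1 - u) := by
          rw [intervalIntegral.integral_comp_sub_left]; norm_num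
      _ = ∫ u in (1 / 2 : ℝ)..1, g u := by
          refine intervalIntegral.integral_congr_ae ?_
          filter_upwards [hsymm, (countable_singleton (1 : ℝ)).ae_notMem volume] with u hu hu1 hmem
          rw [uIoc_of_le (by norm_num)] at hmem
          exact hu ⟨by linarith [hmem.1], lt_of_le_of_ne hmem.2 hu1⟩
  have hupper : ∫ u in (0 : ℝ)..1, g ((1 + u) / 2) = 2 * ∫ u in (1 / 2 : ℝ)..1, g u := by
    simp_rw [add_div, add_comm (1 / 2 : ℝ)]
    rw [intervalIntegral.integral_comp_div_add g two_ne_zero]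
    norm_num
  rw [← intervalIntegral.integral_add_adjacent_intervals (b := 1 / 2)
    (hg.mono_set (uIcc_subset_uIcc left_mem_uIcc (by norm_num [mem_uIcc])))
    (hg.mono_set (uIcc_subset_uIcc (by norm_num [mem_uIcc]) right_mem_uIcc)), hlower, hupper]
  ring

theorem integral_prod_quantile_eq_integral_prod_quantile_map_abs {ι : Type*} [Fintype ι]
    (hι : Even (Fintype.card ι)) (F : ι → Measure ℝ) [∀ i, IsProbabilityMeasure (F i)]
    (hsym : ∀ i, (F i).map (fun x => -x) = F i)
    (hint : IntegrableOn (fun u => ∏ i, quantile (F i) u) (Icc 0 1)) :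
    ∫ u in Icc (0 : ℝ) 1, ∏ i, quantile (F i) u
      = ∫ u in Icc (0 : ℝ) 1, ∏ i, quantile ((F i).map fun x => |x|) u := by
  have hsymm : ∀ᵐ u, u ∈ Ioo (0 : ℝ) 1 →
      ∏ i, quantile (F i) (1 - u) = ∏ i, quantile (F i) u := by
    filter_upwards [ae_all_iff.2 fun i => ae_quantile_one_sub_eq_neg (hsym i)] with u hu hu01
    rw [Finset.prod_congr rfl fun i _ => hu i hu01, Finset.prod_neg, Finset.card_univ,
      hι.neg_one_pow, one_mul]
  simp only [integral_Icc_eq_integral_Ioc, ← intervalIntegral.integral_of_le zero_le_one]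
  rw [intervalIntegral_zero_one_eq_comp_one_add_div_two
    ((intervalIntegrable_iff_integrableOn_Icc_of_le zero_le_one).2 hint) hsymm]
  refine intervalIntegral.integral_congr_ae ?_
  filter_upwards [(countable_singleton (1 : ℝ)).ae_notMem volume] with u hu1 hmem
  rw [uIoc_of_le zero_le_one] at hmem
  exact Finset.prod_congr rfl fun i _ =>
    (quantile_map_abs (hsym i) ⟨hmem.1, lt_of_le_of_ne hmem.2 hu1⟩).symm

section LayerCake

variable {α ι : Type*} [MeasurableSpace α] [Fintype ι]

lemma lintegral_prod_ofReal_eq_of_measurable (m : Measure α) [SFinite m] {f : ι → α → ℝ}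
    (hf : ∀ i, Measurable (f i)) :
    ∫⁻ a, ∏ i, ENNReal.ofReal (f i a) ∂m = ∫⁻ t : ι → ℝ, m {a | ∀ i, t i ∈ Ico 0 (f i a)} := by
  set S : Set (α × (ι → ℝ)) := {p | ∀ i, p.2 i ∈ Ico 0 (f i p.1)}
  have hS : MeasurableSet S := by
    have : S = ⋂ i, {p | 0 ≤ p.2 i} ∩ {p | p.2 i < f i p.1} := by ext; simp [S]
    rw [this]
    exact MeasurableSet.iInter fun i => (measurableSet_le measurable_const (by fun_prop)).inter
      (measurableSet_lt (by fun_prop) ((hf i).comp measurable_fst))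
  calc ∫⁻ a, ∏ i, ENNReal.ofReal (f i a) ∂m = ∫⁻ a, volume (Prod.mk a ⁻¹' S) ∂m := by
        congr with a
        have : Prod.mk a ⁻¹' S = univ.pi fun i => Ico 0 (f i a) := by ext; simp [S]
        simp [this, volume_pi_pi]
    _ = m.prod volume S := (Measure.prod_apply hS).symm
    _ = _ := Measure.prod_apply_symm hS

/-- Multivariate layer cake: `∏ i, (f i a)⁺` is the volume of the box `∏ i, [0, f i a)`. -/
lemma lintegral_prod_ofReal_eq (m : Measure α) [SFinite m] {f : ι → α → ℝ}
    (hf : ∀ i, AEMeasurable (f i) m) :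
    ∫⁻ a, ∏ i, ENNReal.ofReal (f i a) ∂m = ∫⁻ t : ι → ℝ, m {a | ∀ i, t i ∈ Ico 0 (f i a)} := by
  have hmk : ∀ᵐ a ∂m, ∀ i, f i a = (hf i).mk _ a := ae_all_iff.2 fun i => (hf i).ae_eq_mk
  calc ∫⁻ a, ∏ i, ENNReal.ofReal (f i a) ∂m
        = ∫⁻ a, ∏ i, ENNReal.ofReal ((hf i).mk _ a) ∂m :=
          lintegral_congr_ae (by filter_upwards [hmk] with a ha; simp only [ha])
    _ = ∫⁻ t : ι → ℝ, m {a | ∀ i, t i ∈ Ico 0 ((hf i).mk _ a)} :=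
          lintegral_prod_ofReal_eq_of_measurable m fun i => (hf i).measurable_mk
    _ = _ := lintegral_congr fun t => measure_congr <| eventuallyEq_set.2 <| by
          filter_upwards [hmk] with a ha
          simp only [ha]

end LayerCake

section Lorentz

variable {Ω ι : Type*} [MeasurableSpace Ω] [Fintype ι] {μ : Measure Ω} [IsProbabilityMeasure μ]
  {Z : ι → Ω → ℝ}

/-- The events `{t i < q_i U} = {cdf_i (t i) < U}` are nested, so their intersection attains the
bound `min_i P(t i < Z i)`. -/
lemma measure_forall_mem_Ico_le (hZ : ∀ i, Measurable (Z i)) (t : ι → ℝ) :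
    μ {ω | ∀ i, t i ∈ Ico 0 (Z i ω)}
      ≤ volume.restrict (Ioo 0 1) {u | ∀ i, t i ∈ Ico 0 (quantile (μ.map (Z i)) u)} := by
  have := fun i => Measure.isProbabilityMeasure_map (μ := μ) (hZ i).aemeasurable
  by_cases ht : ∀ i, 0 ≤ t i
  swap
  · obtain ⟨i, hi⟩ := not_forall.1 ht
    have : {ω | ∀ i, t i ∈ Ico 0 (Z i ω)} = ∅ :=
      eq_empty_of_forall_notMem fun ω hω => hi (hω i).1
    rw [this, measure_empty]
    exact zero_le
  rcases isEmpty_or_nonempty ι with hι | hι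
  · simp
  obtain ⟨j, -, hj⟩ := Finset.exists_max_image Finset.univ
    (fun i => cdf (μ.map (Z i)) (t i)) Finset.univ_nonempty
  have hc := cdf_nonneg (μ.map (Z j)) (t j)
  calc μ {ω | ∀ i, t i ∈ Ico 0 (Z i ω)} ≤ μ (Z j ⁻¹' Ioi (t j)) :=
        measure_mono fun ω hω => (hω j).2
    _ = volume (Ioo (cdf (μ.map (Z j)) (t j)) 1) := by
      rw [← Measure.map_apply (hZ j) measurableSet_Ioi, ← ofReal_measureReal (measure_ne_top _ _),
        measureReal_Ioi_eq_one_sub_cdf, Real.volume_Ioo]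
    _ ≤ _ := by
      rw [Measure.restrict_apply' measurableSet_Ioo]
      refine measure_mono fun u hu => ⟨fun i => ⟨ht i, ?_⟩, hc.trans_lt hu.1, hu.2⟩
      exact (lt_quantile_iff (hc.trans_lt hu.1) hu.2).2 ((hj i (Finset.mem_univ i)).trans_lt hu.1)

theorem lintegral_prod_ofReal_le_lintegral_prod_quantile (hZ : ∀ i, Measurable (Z i)) :
    ∫⁻ ω, ∏ i, ENNReal.ofReal (Z i ω) ∂μ
      ≤ ∫⁻ u in Ioo 0 1, ∏ i, ENNReal.ofReal (quantile (μ.map (Z i)) u) := by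
  have := fun i => Measure.isProbabilityMeasure_map (μ := μ) (hZ i).aemeasurable
  rw [lintegral_prod_ofReal_eq μ fun i => (hZ i).aemeasurable,
    lintegral_prod_ofReal_eq _ fun i => aemeasurable_quantile]
  exact lintegral_mono (measure_forall_mem_Ico_le hZ)

theorem integral_prod_le_integral_prod_quantile (hZ : ∀ i, Measurable (Z i))
    (hZ0 : ∀ i ω, 0 ≤ Z i ω)
    (hint : IntegrableOn (fun u => ∏ i, quantile (μ.map (Z i)) u) (Icc 0 1)) :
    ∫ ω, ∏ i, Z i ω ∂μ ≤ ∫ u in Icc 0 1, ∏ i, quantile (μ.map (Z i)) u := by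
  have := fun i => Measure.isProbabilityMeasure_map (μ := μ) (hZ i).aemeasurable
  have hq0 : ∀ u ∈ Ioo (0 : ℝ) 1, ∀ i, 0 ≤ quantile (μ.map (Z i)) u := fun u hu i => by
    refine quantile_nonneg ?_ hu
    rw [Measure.map_apply (hZ i) measurableSet_Iio]
    exact measure_mono_null (fun ω hω => (hZ0 i ω).not_gt hω) measure_empty
  have hint' := hint.mono_set Ioo_subset_Icc_self
  rw [integral_Icc_eq_integral_Ioo,
    integral_eq_lintegral_of_nonneg_ae (.of_forall fun ω => Finset.prod_nonneg fun i _ => hZ0 i ω)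
      (by fun_prop),
    integral_eq_lintegral_of_nonneg_ae ((ae_restrict_iff' measurableSet_Ioo).2 <| .of_forall
      fun u hu => Finset.prod_nonneg fun i _ => hq0 u hu i) hint'.aestronglyMeasurable]
  refine ENNReal.toReal_mono hint'.lintegral_lt_top.ne ?_
  calc ∫⁻ ω, ENNReal.ofReal (∏ i, Z i ω) ∂μ = ∫⁻ ω, ∏ i, ENNReal.ofReal (Z i ω) ∂μ := by
        simp only [ENNReal.ofReal_prod_of_nonneg fun i _ => hZ0 i _]
    _ ≤ ∫⁻ u in Ioo 0 1, ∏ i, ENNReal.ofReal (quantile (μ.map (Z i)) u) :=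
        lintegral_prod_ofReal_le_lintegral_prod_quantile hZ
    _ = _ := setLIntegral_congr_fun measurableSet_Ioo fun u hu =>
        (ENNReal.ofReal_prod_of_nonneg fun i _ => hq0 u hu i).symm

end Lorentz

theorem stmt_6_general (d : ℕ) (hd : Even d) (F : Fin d → Measure ℝ)
    [∀ i, IsProbabilityMeasure (F i)]
    (hsym : ∀ i, (F i).map (fun x => -x) = F i)
    (hIntQ : IntegrableOn
      (fun u => ∏ i, quantile ((F i).map (fun x => |x|)) u) (Icc (0:ℝ) 1) volume)
    (hIntC : IntegrableOn (fun u => ∏ i, quantile (F i) u) (Icc (0:ℝ) 1) volume) :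
    (∫ u in Icc (0:ℝ) 1, ∏ i, quantile (F i) u
        = ∫ u in Icc (0:ℝ) 1, ∏ i, quantile ((F i).map (fun x => |x|)) u) ∧
    (∀ (Ω : Type*) [MeasurableSpace Ω] (μ : Measure Ω) [IsProbabilityMeasure μ]
        (Y : Fin d → Ω → ℝ), (∀ i, Measurable (Y i)) → (∀ i, μ.map (Y i) = F i) →
        Integrable (fun ω => ∏ i, Y i ω) μ →
        ∫ ω, ∏ i, Y i ω ∂μ ≤ ∫ u in Icc (0:ℝ) 1, ∏ i, quantile (F i) u) := by
  have heq := integral_prod_quantile_eq_integral_prod_quantile_map_abs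
    (by rwa [Fintype.card_fin]) F hsym hIntC
  refine ⟨heq, fun Ω _ μ _ Y hY hlaw _ => ?_⟩
  have hlawAbs : ∀ i, μ.map (fun ω => |Y i ω|) = (F i).map fun x => |x| := fun i => by
    rw [← hlaw i, Measure.map_map measurable_abs (hY i)]
    rfl
  calc ∫ ω, ∏ i, Y i ω ∂μ ≤ ∫ ω, ∏ i, |Y i ω| ∂μ := by
        simpa only [Finset.abs_prod] using
          (le_abs_self _).trans (abs_integral_le_integral_abs (f := fun ω => ∏ i, Y i ω))
    _ ≤ ∫ u in Icc 0 1, ∏ i, quantile (μ.map fun ω => |Y i ω|) u :=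
        integral_prod_le_integral_prod_quantile (fun i => (hY i).abs) (fun _ _ => abs_nonneg _)
          (by simpa only [hlawAbs] using hIntQ)
    _ = ∫ u in Icc (0:ℝ) 1, ∏ i, quantile (F i) u := by simp only [hlawAbs, heq]

/-- For `d` even and symmetric zero-mean marginals, the supremum of the expected product
equals `E(∏ G_i⁻¹(U))` and is attained by the comonotonic coupling `X_i = F_i⁻¹(U)`. -/
theorem stmt_6 (d : ℕ) (hd : Even d) (F : Fin d → Measure ℝ)
    [∀ i, IsProbabilityMeasure (F i)]
    (hsym : ∀ i, (F i).map (fun x => -x) = F i)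
    (hL2 : ∀ i, MemLp (id : ℝ → ℝ) 2 (F i))
    (hIntQ : IntegrableOn
      (fun u => ∏ i, quantile ((F i).map (fun x => |x|)) u) (Icc (0:ℝ) 1) volume)
    (hIntC : IntegrableOn (fun u => ∏ i, quantile (F i) u) (Icc (0:ℝ) 1) volume) :
    (∫ u in Icc (0:ℝ) 1, ∏ i, quantile (F i) u
        = ∫ u in Icc (0:ℝ) 1, ∏ i, quantile ((F i).map (fun x => |x|)) u) ∧
    (∀ (Ω : Type*) [MeasurableSpace Ω] (μ : Measure Ω) [IsProbabilityMeasure μ]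
        (Y : Fin d → Ω → ℝ), (∀ i, Measurable (Y i)) → (∀ i, μ.map (Y i) = F i) →
        Integrable (fun ω => ∏ i, Y i ω) μ →
        ∫ ω, ∏ i, Y i ω ∂μ ≤ ∫ u in Icc (0:ℝ) 1, ∏ i, quantile (F i) u) :=
  stmt_6_general d hd F hsym hIntQ hIntC
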